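/- arXiv:2301.05005 — 4 statements merged into one kernel-verified Lean document; each statement's English description precedes it below -/
import Mathlib

section
/- Let l, m, n be natural numbers, let L be an l×m complex matrix and R an l×n complex matrix. Then for every m×n complex matrix A one has ‖(Lᴴ R) ∘ A‖_∞ ≤ ‖L‖_c · ‖R‖_c · ‖A‖_∞, i.e. the Schur multiplier S_{LᴴR} has operator norm at most ‖L‖_c‖R‖_c. -/
/-!
Writing `M = (Lᴴ R) ∘ A`, one has `(M v)_i = ∑_k conj (L k i) · (A (R k ∘ v))_i`, i.e.
`M = ∑_k D(L k)ᴴ A D(R k)` with diagonal matrices built from the rows of `L` and `R`.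
Cauchy–Schwarz in `k` bounds `|(M v)_i|²` by `‖L‖_c² ∑_k |(A (R k ∘ v))_i|²`; summing over `i`,
applying `‖A‖_∞` to each vector `R k ∘ v`, and using `∑_k ‖R k ∘ v‖² ≤ ‖R‖_c² ‖v‖²` gives the bound.
-/

open Matrix BigOperators

/-- The ℓ²→ℓ² operator norm of a complex matrix. -/
noncomputable def opNorm {m n : ℕ} (A : Matrix (Fin m) (Fin n) ℂ) : ℝ :=
  ‖(Matrix.toEuclideanLin A).toContinuousLinearMap‖

/-- The column norm: the maximum Euclidean norm of a column. -/
noncomputable def colNorm {l m : ℕ} (L : Matrix (Fin l) (Fin m) ℂ) : ℝ :=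
  ⨆ j : Fin m, Real.sqrt (∑ i, ‖L i j‖ ^ 2)

lemma norm_sum_mul_sq_le {ι α : Type*} [SeminormedRing α] (s : Finset ι) (x y : ι → α) :
    ‖∑ k ∈ s, x k * y k‖ ^ 2 ≤ (∑ k ∈ s, ‖x k‖ ^ 2) * ∑ k ∈ s, ‖y k‖ ^ 2 := by
  calc ‖∑ k ∈ s, x k * y k‖ ^ 2 ≤ (∑ k ∈ s, ‖x k‖ * ‖y k‖) ^ 2 := by
        gcongr
        exact (norm_sum_le _ _).trans (Finset.sum_le_sum fun k _ => norm_mul_le _ _)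
    _ ≤ _ := Finset.sum_mul_sq_le_sq_mul_sq s _ _

lemma hadamard_conjTranspose_mul_mulVec_apply {l m n α : Type*} [Fintype l] [Fintype n]
    [CommSemiring α] [StarRing α] (L : Matrix l m α) (R : Matrix l n α) (A : Matrix m n α)
    (v : n → α) (i : m) :
    ((Lᴴ * R) ⊙ A *ᵥ v) i = ∑ k, star (L k i) * (A *ᵥ (R k * v)) i := by
  simp only [mulVec, dotProduct, hadamard_apply, mul_apply, conjTranspose_apply, Pi.mul_apply,
    Finset.mul_sum, Finset.sum_mul]
  rw [Finset.sum_comm]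
  exact Finset.sum_congr rfl fun k _ => Finset.sum_congr rfl fun j _ => by ring

section Norms

variable {l m n : ℕ}

lemma colNorm_nonneg (L : Matrix (Fin l) (Fin m) ℂ) : 0 ≤ colNorm L :=
  Real.iSup_nonneg fun _ => Real.sqrt_nonneg _

lemma sum_sq_norm_le_colNorm_sq (L : Matrix (Fin l) (Fin m) ℂ) (j : Fin m) :
    ∑ i, ‖L i j‖ ^ 2 ≤ colNorm L ^ 2 := by
  rw [← Real.sqrt_le_left (colNorm_nonneg L)]
  exact le_ciSup (f := fun j => Real.sqrt (∑ i, ‖L i j‖ ^ 2)) (Set.finite_range _).bddAbove j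

lemma opNorm_nonneg (A : Matrix (Fin m) (Fin n) ℂ) : 0 ≤ opNorm A := norm_nonneg _

lemma sum_sq_norm_mulVec_le (A : Matrix (Fin m) (Fin n) ℂ) (x : Fin n → ℂ) :
    ∑ i, ‖(A *ᵥ x) i‖ ^ 2 ≤ opNorm A ^ 2 * ∑ j, ‖x j‖ ^ 2 := by
  have h := (Matrix.toEuclideanLin A).toContinuousLinearMap.le_opNorm (WithLp.toLp 2 x)
  rw [← pow_le_pow_iff_left₀ (norm_nonneg _) (by positivity) two_ne_zero, mul_pow,
    EuclideanSpace.norm_sq_eq, EuclideanSpace.norm_sq_eq] at h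
  exact h

lemma opNorm_le_of_sum_sq_norm_mulVec_le (A : Matrix (Fin m) (Fin n) ℂ) {C : ℝ} (hC : 0 ≤ C)
    (h : ∀ x : Fin n → ℂ, ∑ i, ‖(A *ᵥ x) i‖ ^ 2 ≤ C ^ 2 * ∑ j, ‖x j‖ ^ 2) :
    opNorm A ≤ C := by
  refine ContinuousLinearMap.opNorm_le_bound _ hC fun x => ?_
  rw [← pow_le_pow_iff_left₀ (norm_nonneg _) (by positivity) two_ne_zero, mul_pow,
    EuclideanSpace.norm_sq_eq, EuclideanSpace.norm_sq_eq]
  exact h x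

lemma sum_sum_sq_norm_mul_le_colNorm_sq (R : Matrix (Fin l) (Fin n) ℂ) (v : Fin n → ℂ) :
    ∑ k, ∑ j, ‖(R k * v) j‖ ^ 2 ≤ colNorm R ^ 2 * ∑ j, ‖v j‖ ^ 2 := by
  rw [Finset.sum_comm, Finset.mul_sum]
  refine Finset.sum_le_sum fun j _ => ?_
  simp only [Pi.mul_apply, norm_mul, mul_pow, ← Finset.sum_mul]
  exact mul_le_mul_of_nonneg_right (sum_sq_norm_le_colNorm_sq R j) (sq_nonneg _)

end Norms

theorem schur_multiplier_norm_le_colNorm_mul_colNorm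
    (l m n : ℕ) (L : Matrix (Fin l) (Fin m) ℂ) (R : Matrix (Fin l) (Fin n) ℂ)
    (A : Matrix (Fin m) (Fin n) ℂ) :
    opNorm (Matrix.hadamard (Lᴴ * R) A) ≤ colNorm L * colNorm R * opNorm A := by
  have hL := colNorm_nonneg L
  have hR := colNorm_nonneg R
  have hA := opNorm_nonneg A
  refine opNorm_le_of_sum_sq_norm_mulVec_le _ (by positivity) fun v => ?_
  simp only [hadamard_conjTranspose_mul_mulVec_apply]
  calc ∑ i, ‖∑ k, star (L k i) * (A *ᵥ (R k * v)) i‖ ^ 2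
      ≤ ∑ i, (∑ k, ‖L k i‖ ^ 2) * ∑ k, ‖(A *ᵥ (R k * v)) i‖ ^ 2 := by
        gcongr with i
        simpa only [norm_star] using
          norm_sum_mul_sq_le Finset.univ (fun k => star (L k i)) fun k => (A *ᵥ (R k * v)) i
    _ ≤ ∑ i, colNorm L ^ 2 * ∑ k, ‖(A *ᵥ (R k * v)) i‖ ^ 2 := by
        gcongr with i
        exact sum_sq_norm_le_colNorm_sq L i
    _ = colNorm L ^ 2 * ∑ k, ∑ i, ‖(A *ᵥ (R k * v)) i‖ ^ 2 := by
        rw [← Finset.mul_sum, Finset.sum_comm]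
    _ ≤ colNorm L ^ 2 * ∑ k, opNorm A ^ 2 * ∑ j, ‖(R k * v) j‖ ^ 2 := by
        gcongr with k
        exact sum_sq_norm_mulVec_le A _
    _ ≤ colNorm L ^ 2 * (opNorm A ^ 2 * (colNorm R ^ 2 * ∑ j, ‖v j‖ ^ 2)) := by
        rw [← Finset.mul_sum]
        gcongr
        exact sum_sum_sq_norm_mul_le_colNorm_sq R v
    _ = (colNorm L * colNorm R * opNorm A) ^ 2 * ∑ j, ‖v j‖ ^ 2 := by ring
end

section
/- Let X be a Hermitian n×n complex matrix and let |X| denote the positive semidefinite square root of XᴴX. Then for every n×n complex matrix A one has ‖X ∘ A‖_∞ ≤ (max_{1≤i≤n} |X|_{ii}) · ‖A‖_∞. -/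
/-!
Diagonalise `X = U diag(λ) Uᴴ`; then `|X| = U diag(|λ|) Uᴴ`, so `|X|ᵢᵢ = ∑ₖ |λₖ| |Uᵢₖ|²`.
With `Dₖ` the diagonal matrix of the `k`-th column of `U`, `X ∘ A = ∑ₖ λₖ Dₖ A Dₖᴴ`, hence
`⟪y, (X ∘ A) x⟫ = ∑ₖ λₖ ⟪Dₖᴴ y, A Dₖᴴ x⟫`. Bounding each term by `|λₖ| ‖A‖ ‖Dₖᴴ y‖ ‖Dₖᴴ x‖` and
applying Cauchy–Schwarz with weights `|λₖ|` leaves `∑ₖ |λₖ| ‖Dₖᴴ y‖² = ∑ᵢ |X|ᵢᵢ |yᵢ|²`, which is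
at most `(maxᵢ |X|ᵢᵢ) ‖y‖²`, and likewise for `x`.
-/

open Matrix BigOperators
open scoped ComplexOrder

/-- The positive semidefinite square root of a positive semidefinite matrix
(the definition of `Matrix.PosSemidef.sqrt` in Mathlib of December 2024, since removed). -/
noncomputable def Matrix.PosSemidef.sqrt {n : Type*} [Fintype n] [DecidableEq n] {𝕜 : Type*}
    [RCLike 𝕜] {A : Matrix n n 𝕜} (hA : A.PosSemidef) : Matrix n n 𝕜 :=
  hA.1.eigenvectorUnitary.1 * diagonal ((↑) ∘ (√·) ∘ hA.1.eigenvalues) *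
  (star hA.1.eigenvectorUnitary : Matrix n n 𝕜)

open scoped Matrix.Norms.L2Operator InnerProductSpace
open WithLp

theorem Real.sum_mul_mul_le_sqrt_mul_sqrt {ι : Type*} (s : Finset ι) {w f g : ι → ℝ}
    (hw : ∀ i, 0 ≤ w i) (hf : ∀ i, 0 ≤ f i) (hg : ∀ i, 0 ≤ g i) :
    ∑ i ∈ s, w i * f i * g i ≤ √(∑ i ∈ s, w i * f i ^ 2) * √(∑ i ∈ s, w i * g i ^ 2) := by
  refine le_of_eq_of_le (Finset.sum_congr rfl fun i _ => ?_)
    (Real.sum_sqrt_mul_sqrt_le s (fun i => mul_nonneg (hw i) (sq_nonneg _))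
      fun i => mul_nonneg (hw i) (sq_nonneg _))
  rw [Real.sqrt_mul (hw i), Real.sqrt_mul (hw i), Real.sqrt_sq (hf i), Real.sqrt_sq (hg i)]
  linear_combination -(f i * g i) * Real.mul_self_sqrt (hw i)

namespace Matrix

variable {𝕜 : Type*} [RCLike 𝕜] {m n ι : Type*}

theorem mul_diagonal_mul_conjTranspose_apply [Fintype ι] [DecidableEq ι]
    (U : Matrix m ι 𝕜) (c : ι → 𝕜) (V : Matrix n ι 𝕜) (i : m) (j : n) :
    (U * diagonal c * Vᴴ) i j = ∑ k, c k * (U i k * star (V j k)) := by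
  simp only [mul_apply, diagonal_apply, conjTranspose_apply, mul_ite, mul_zero,
    Finset.sum_ite_eq', Finset.mem_univ, if_true]
  exact Finset.sum_congr rfl fun k _ => by ring

theorem inner_hadamard_mulVec [Fintype m] [Fintype n] [Fintype ι] [DecidableEq ι]
    (U : Matrix m ι 𝕜) (c : ι → 𝕜) (V : Matrix n ι 𝕜) (A : Matrix m n 𝕜)
    (x : EuclideanSpace 𝕜 n) (y : EuclideanSpace 𝕜 m) :
    ⟪y, toLp 2 (((U * diagonal c * Vᴴ) ⊙ A) *ᵥ ofLp x)⟫_𝕜 =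
      ∑ k, c k * ⟪toLp 2 (fun i => star (U i k) * y i),
        toLp 2 (A *ᵥ fun j => star (V j k) * x j)⟫_𝕜 := by
  simp only [EuclideanSpace.inner_eq_star_dotProduct, dotProduct, mulVec, hadamard_apply,
    mul_diagonal_mul_conjTranspose_apply, Finset.sum_mul, Finset.mul_sum, Pi.star_apply,
    star_mul', star_star]
  refine (Finset.sum_congr rfl fun i _ => Finset.sum_comm).trans (Finset.sum_comm.trans ?_)
  exact Finset.sum_congr rfl fun k _ => Finset.sum_congr rfl fun i _ =>
    Finset.sum_congr rfl fun j _ => by ring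

theorem sum_norm_mul_norm_sq_le [Fintype m] [Fintype ι] (U : Matrix m ι 𝕜) (c : ι → 𝕜)
    {a : ℝ} (ha : ∀ i, ∑ k, ‖c k‖ * ‖U i k‖ ^ 2 ≤ a) (y : EuclideanSpace 𝕜 m) :
    ∑ k, ‖c k‖ * ‖toLp 2 (fun i => star (U i k) * y i)‖ ^ 2 ≤ a * ‖y‖ ^ 2 :=
  calc ∑ k, ‖c k‖ * ‖toLp 2 (fun i => star (U i k) * y i)‖ ^ 2
      = ∑ i, (∑ k, ‖c k‖ * ‖U i k‖ ^ 2) * ‖y i‖ ^ 2 := by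
        simp only [EuclideanSpace.norm_sq_eq, norm_mul, norm_star, mul_pow, Finset.mul_sum,
          Finset.sum_mul]
        exact Finset.sum_comm.trans
          (Finset.sum_congr rfl fun i _ => Finset.sum_congr rfl fun k _ => by ring)
    _ ≤ ∑ i, a * ‖y i‖ ^ 2 := by gcongr with i; exact ha i
    _ = a * ‖y‖ ^ 2 := by rw [EuclideanSpace.norm_sq_eq, Finset.mul_sum]

theorem l2_opNorm_hadamard_le [Fintype m] [Fintype n] [Fintype ι] [DecidableEq n]
    [DecidableEq ι] (U : Matrix m ι 𝕜) (c : ι → 𝕜) (V : Matrix n ι 𝕜) (A : Matrix m n 𝕜)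
    {a b : ℝ} (ha : ∀ i, ∑ k, ‖c k‖ * ‖U i k‖ ^ 2 ≤ a)
    (hb : ∀ j, ∑ k, ‖c k‖ * ‖V j k‖ ^ 2 ≤ b) :
    ‖(U * diagonal c * Vᴴ) ⊙ A‖ ≤ √a * √b * ‖A‖ := by
  rw [l2_opNorm_def]
  refine ContinuousLinearMap.opNorm_le_of_re_inner_le (by positivity) fun x y hx hy => ?_
  set p := fun k => toLp 2 (fun i => star (U i k) * y i)
  set q := fun k => toLp 2 (fun j => star (V j k) * x j)
  calc RCLike.re _ ≤ ‖⟪y, toLp 2 (((U * diagonal c * Vᴴ) ⊙ A) *ᵥ ofLp x)⟫_𝕜‖ := by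
        rw [norm_inner_symm]
        exact RCLike.re_le_norm _
    _ = ‖∑ k, c k * ⟪p k, toLp 2 (A *ᵥ ofLp (q k))⟫_𝕜‖ := by rw [inner_hadamard_mulVec]
    _ ≤ ∑ k, ‖c k‖ * ‖p k‖ * (‖A‖ * ‖q k‖) := by
        refine (norm_sum_le _ _).trans (Finset.sum_le_sum fun k _ => ?_)
        rw [norm_mul, mul_assoc]
        gcongr
        exact (norm_inner_le_norm _ _).trans (by gcongr; exact l2_opNorm_mulVec A (q k))
    _ = ‖A‖ * ∑ k, ‖c k‖ * ‖p k‖ * ‖q k‖ := by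
        rw [Finset.mul_sum]
        exact Finset.sum_congr rfl fun k _ => by ring
    _ ≤ ‖A‖ * (√(a * ‖y‖ ^ 2) * √(b * ‖x‖ ^ 2)) := by
        gcongr
        refine (Real.sum_mul_mul_le_sqrt_mul_sqrt _ (fun _ => norm_nonneg _)
          (fun _ => norm_nonneg _) fun _ => norm_nonneg _).trans ?_
        exact mul_le_mul (Real.sqrt_le_sqrt (sum_norm_mul_norm_sq_le U c ha y))
          (Real.sqrt_le_sqrt (sum_norm_mul_norm_sq_le V c hb x)) (Real.sqrt_nonneg _)
          (Real.sqrt_nonneg _)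
    _ = √a * √b * ‖A‖ := by
        simp only [hx, hy, one_pow, mul_one]
        ring

variable [Fintype n] [DecidableEq n]

open scoped MatrixOrder in
theorem PosSemidef.sqrt_eq_cfcSqrt {A : Matrix n n 𝕜} (hA : A.PosSemidef) :
    hA.sqrt = CFC.sqrt A := by
  rw [CFC.sqrt_eq_real_sqrt A hA.nonneg, cfcₙ_eq_cfc, hA.1.cfc_eq, IsHermitian.cfc,
    Unitary.conjStarAlgAut_apply, PosSemidef.sqrt]

theorem IsHermitian.eq_mul_diagonal_mul_conjTranspose {A : Matrix n n 𝕜} (hA : A.IsHermitian) :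
    A = (hA.eigenvectorUnitary : Matrix n n 𝕜) * diagonal (fun k => (hA.eigenvalues k : 𝕜)) *
      (hA.eigenvectorUnitary : Matrix n n 𝕜)ᴴ := by
  conv_lhs => rw [hA.spectral_theorem, Unitary.conjStarAlgAut_apply]
  rfl

open scoped MatrixOrder in
theorem IsHermitian.sqrt_conjTranspose_mul_self {A : Matrix n n 𝕜} (hA : A.IsHermitian) :
    (posSemidef_conjTranspose_mul_self A).sqrt =
      (hA.eigenvectorUnitary : Matrix n n 𝕜) * diagonal (fun k => ((|hA.eigenvalues k| : ℝ) : 𝕜)) *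
        (hA.eigenvectorUnitary : Matrix n n 𝕜)ᴴ := by
  rw [PosSemidef.sqrt_eq_cfcSqrt, ← star_eq_conjTranspose, ← CFC.abs,
    CFC.abs_eq_cfc_norm A hA.isSelfAdjoint, hA.cfc_eq, IsHermitian.cfc,
    Unitary.conjStarAlgAut_apply]
  rfl

theorem IsHermitian.re_sqrt_conjTranspose_mul_self_apply_self {A : Matrix n n 𝕜}
    (hA : A.IsHermitian) (i : n) :
    RCLike.re ((posSemidef_conjTranspose_mul_self A).sqrt i i) =
      ∑ k, ‖(hA.eigenvalues k : 𝕜)‖ * ‖(hA.eigenvectorUnitary : Matrix n n 𝕜) i k‖ ^ 2 := by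
  simp only [hA.sqrt_conjTranspose_mul_self, mul_diagonal_mul_conjTranspose_apply,
    RCLike.star_def, RCLike.mul_conj, map_sum, RCLike.norm_ofReal, ← RCLike.ofReal_pow,
    ← RCLike.ofReal_mul, RCLike.ofReal_re]

end Matrix

/-- Davis' bound: for a Hermitian matrix `X`, the Schur multiplier norm of `X`
is bounded by the largest diagonal entry of `|X|`, the positive semidefinite
square root of `Xᴴ * X`. -/
theorem schur_multiplier_norm_le_sup_diag_abs
    (n : ℕ) (X : Matrix (Fin n) (Fin n) ℂ) (hX : X.IsHermitian)
    (A : Matrix (Fin n) (Fin n) ℂ) :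
    opNorm (Matrix.hadamard X A) ≤
      (⨆ i : Fin n, ((Matrix.posSemidef_conjTranspose_mul_self X).sqrt i i).re) * opNorm A := by
  set d := fun i => ((Matrix.posSemidef_conjTranspose_mul_self X).sqrt i i).re
  have hdiag := fun i => (hX.re_sqrt_conjTranspose_mul_self_apply_self i).symm.le.trans
    (le_ciSup (f := d) (Set.finite_range d).bddAbove i)
  have hC : 0 ≤ ⨆ i, d i := Real.iSup_nonneg fun i => by
    rw [show d i = _ from hX.re_sqrt_conjTranspose_mul_self_apply_self i]
    positivity
  have hSchur := l2_opNorm_hadamard_le _ _ _ A hdiag hdiag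
  rw [← hX.eq_mul_diagonal_mul_conjTranspose, Real.mul_self_sqrt hC] at hSchur
  exact hSchur
end

section
/- Let X be an m×n complex matrix. Then for every m×n complex matrix A one has ‖X ∘ A‖_∞ ≤ (max_{1≤i≤m} ((XXᴴ)^{1/2})_{ii})^{1/2} · (max_{1≤j≤n} ((XᴴX)^{1/2})_{jj})^{1/2} · ‖A‖_∞ (Walter's upper bound for the Schur multiplier norm). -/
/-!
Factor `X = B * C` with `B * Bᴴ = (X * Xᴴ)^{1/2}` and `Cᴴ * C = (Xᴴ * X)^{1/2}`: diagonalising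
`X * Xᴴ = U * diagonal λ * Uᴴ`, take `B = U * diagonal λ^{1/4}` and `C = diagonal λ^{-1/4} * Uᴴ * X`,
where `0⁻¹ = 0` is harmless because the rows of `Uᴴ * X` belonging to `λ k = 0` vanish.
For such a factorization `⟪x, ((B * C) ∘ A) y⟫ = ∑ k, ⟪u k, A (v k)⟫` with
`u k = (conj (B i k) * x i)ᵢ` and `v k = (C k j * y j)ⱼ`, so Cauchy–Schwarz over `k` bounds it by
`‖A‖` times the largest row norm of `B` times the largest column norm of `C`; their squares are the
diagonal entries of `B * Bᴴ` and `Cᴴ * C`.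
-/

open Matrix BigOperators
open scoped ComplexOrder

/-- The positive semidefinite square root of a positive semidefinite matrix, as
`Matrix.PosSemidef.sqrt` was defined in Mathlib (Dec 2024). -/
noncomputable def posSemidefSqrt {k : Type*} [Fintype k] [DecidableEq k]
    {M : Matrix k k ℂ} (hM : M.PosSemidef) : Matrix k k ℂ :=
  (hM.1.eigenvectorUnitary : Matrix k k ℂ) *
    diagonal (fun i => ((Real.sqrt (hM.1.eigenvalues i) : ℝ) : ℂ)) *
    (star hM.1.eigenvectorUnitary : Matrix k k ℂ)

section Factorization

variable {l m n : Type*} [Fintype n]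

open scoped MatrixOrder in
theorem posSemidefSqrt_eq_cfcSqrt [Fintype m] [DecidableEq m] {M : Matrix m m ℂ}
    (hM : M.PosSemidef) : posSemidefSqrt hM = CFC.sqrt M := by
  rw [CFC.sqrt_eq_cfc, cfc_nnreal_eq_real _ M hM.nonneg, hM.1.cfc_eq]
  simp [IsHermitian.cfc, posSemidefSqrt, Function.comp_def, max_eq_left (hM.eigenvalues_nonneg _)]

open scoped MatrixOrder in
theorem posSemidefSqrt_eq_of_mul_self_eq [Fintype m] [DecidableEq m] {S M : Matrix m m ℂ}
    (hS : S.PosSemidef) (hM : M.PosSemidef) (h : S * S = M) : posSemidefSqrt hM = S := by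
  rw [posSemidefSqrt_eq_cfcSqrt]
  exact CFC.sqrt_unique h hS.nonneg

theorem row_eq_zero_of_mul_conjTranspose_apply_self_eq_zero {Y : Matrix m n ℂ} {k : m}
    (h : (Y * Yᴴ) k k = 0) : Y k = 0 :=
  dotProduct_self_star_eq_zero.1 h

variable [Fintype l] [Fintype m] [DecidableEq m]

theorem diagonal_mul_inv_mul_eq_self {Y : Matrix m n ℂ} {r : m → ℝ}
    (hY : Y * Yᴴ = diagonal fun k => (r k : ℂ) ^ 4) :
    (diagonal fun k => (r k : ℂ) * (r k : ℂ)⁻¹) * Y = Y := by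
  ext k j
  rw [diagonal_mul]
  by_cases hr : r k = 0
  · have hYk : Y k = 0 := row_eq_zero_of_mul_conjTranspose_apply_self_eq_zero (by simp [hY, hr])
    simp [hYk]
  · simp [hr]

theorem exists_mul_eq_of_mul_conjTranspose_eq_diagonal {U : Matrix l m ℂ} (hU : Uᴴ * U = 1)
    {Y : Matrix m n ℂ} {r : m → ℝ} (hY : Y * Yᴴ = diagonal fun k => (r k : ℂ) ^ 4) :
    ∃ (B : Matrix l m ℂ) (C : Matrix m n ℂ), B * C = U * Y ∧
      B * Bᴴ * (B * Bᴴ) = U * Y * (U * Y)ᴴ ∧ Cᴴ * C * (Cᴴ * C) = (U * Y)ᴴ * (U * Y) := by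
  set d : Matrix m m ℂ := diagonal fun k => (r k : ℂ)
  set e : Matrix m m ℂ := diagonal fun k => (r k : ℂ)⁻¹
  have hd : dᴴ = d := by simp [d]
  have he : eᴴ = e := by simp [e]
  have hproj := diagonal_mul_inv_mul_eq_self hY
  refine ⟨U * d, e * Y, ?_, ?_, ?_⟩
  · rw [Matrix.mul_assoc, ← Matrix.mul_assoc d, diagonal_mul_diagonal, hproj]
  · calc U * d * (U * d)ᴴ * (U * d * (U * d)ᴴ) = U * (d * d * (Uᴴ * U) * d * d) * Uᴴ := by
          simp only [conjTranspose_mul, hd, Matrix.mul_assoc]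
      _ = U * (Y * Yᴴ) * Uᴴ := by
          rw [hU, Matrix.mul_one, hY]
          simp only [d, diagonal_mul_diagonal]
          congr; ext k; ring
      _ = U * Y * (U * Y)ᴴ := by simp only [conjTranspose_mul, Matrix.mul_assoc]
  · calc (e * Y)ᴴ * (e * Y) * ((e * Y)ᴴ * (e * Y)) = Yᴴ * (e * e * (Y * Yᴴ) * e * e * Y) := by
          simp only [conjTranspose_mul, he, Matrix.mul_assoc]
      _ = Yᴴ * ((diagonal fun k => (r k : ℂ) * (r k : ℂ)⁻¹) * Y) := by
          rw [hY]
          simp only [e, diagonal_mul_diagonal]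
          congr 3; ext k
          by_cases hr : r k = 0
          · simp [hr]
          · field_simp
      _ = (U * Y)ᴴ * (U * Y) := by
          rw [hproj, conjTranspose_mul, Matrix.mul_assoc, ← Matrix.mul_assoc Uᴴ, hU, Matrix.one_mul]

theorem exists_mul_eq_and_posSemidefSqrt_eq [DecidableEq n] (X : Matrix m n ℂ) :
    ∃ (B : Matrix m m ℂ) (C : Matrix m n ℂ), B * C = X ∧
      B * Bᴴ = posSemidefSqrt (posSemidef_self_mul_conjTranspose X) ∧
      Cᴴ * C = posSemidefSqrt (posSemidef_conjTranspose_mul_self X) := by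
  set hP := (posSemidef_self_mul_conjTranspose X).1
  set U : Matrix m m ℂ := ↑hP.eigenvectorUnitary
  have hU : Uᴴ * U = 1 := Unitary.coe_star_mul_self _
  have hUY : U * (Uᴴ * X) = X := by
    rw [← Matrix.mul_assoc, ← star_eq_conjTranspose,
      mem_unitaryGroup_iff.mp hP.eigenvectorUnitary.2, Matrix.one_mul]
  have hY : Uᴴ * X * (Uᴴ * X)ᴴ =
      diagonal fun k => ((Real.sqrt (Real.sqrt (hP.eigenvalues k)) : ℝ) : ℂ) ^ 4 := by
    have hdiag := hP.conjStarAlgAut_star_eigenvectorUnitary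
    simp only [Unitary.conjStarAlgAut_star_apply] at hdiag
    rw [conjTranspose_mul, conjTranspose_conjTranspose, ← Matrix.mul_assoc, Matrix.mul_assoc _ X,
      ← star_eq_conjTranspose, hdiag]
    congr 1; ext k
    have hsqrt : Real.sqrt (Real.sqrt (hP.eigenvalues k)) ^ 4 = hP.eigenvalues k := by
      rw [show 4 = 2 * 2 from rfl, pow_mul, Real.sq_sqrt (Real.sqrt_nonneg _),
        Real.sq_sqrt ((posSemidef_self_mul_conjTranspose X).eigenvalues_nonneg k)]
    simp [← Complex.ofReal_pow, hsqrt]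
  obtain ⟨B, C, hBC, hB, hC⟩ := exists_mul_eq_of_mul_conjTranspose_eq_diagonal hU hY
  rw [hUY] at hBC hB hC
  exact ⟨B, C, hBC,
    (posSemidefSqrt_eq_of_mul_self_eq (posSemidef_self_mul_conjTranspose B) _ hB).symm,
    (posSemidefSqrt_eq_of_mul_self_eq (posSemidef_conjTranspose_mul_self C) _ hC).symm⟩

end Factorization

section SchurMultiplier

variable {ι μ ν : Type*} [Fintype ι]

theorem re_mul_conjTranspose_apply_self (B : Matrix μ ι ℂ) (i : μ) :
    ((B * Bᴴ) i i).re = ∑ k, ‖B i k‖ ^ 2 := by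
  simp [mul_apply, Complex.mul_conj', ← Complex.ofReal_pow]

theorem re_conjTranspose_mul_apply_self (C : Matrix ι ν ℂ) (j : ν) :
    ((Cᴴ * C) j j).re = ∑ k, ‖C k j‖ ^ 2 := by
  simp [mul_apply, Complex.conj_mul', ← Complex.ofReal_pow]

variable [Fintype ν]

theorem sum_norm_sq_toLp_mul_le (C : Matrix ι ν ℂ) (y : EuclideanSpace ℂ ν) :
    ∑ k, ‖(WithLp.toLp 2 fun j => C k j * y j : EuclideanSpace ℂ ν)‖ ^ 2 ≤
      (⨆ j, ∑ k, ‖C k j‖ ^ 2) * ‖y‖ ^ 2 := by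
  simp only [EuclideanSpace.norm_sq_eq, norm_mul, mul_pow]
  rw [Finset.sum_comm, Finset.mul_sum]
  refine Finset.sum_le_sum fun j _ => ?_
  rw [← Finset.sum_mul]
  gcongr
  exact le_ciSup (f := fun j => ∑ k, ‖C k j‖ ^ 2) (Set.finite_range _).bddAbove j

theorem inner_toEuclideanLin_hadamard_mul [Fintype μ] [DecidableEq ν] (B : Matrix μ ι ℂ)
    (C : Matrix ι ν ℂ) (A : Matrix μ ν ℂ) (x : EuclideanSpace ℂ μ) (y : EuclideanSpace ℂ ν) :
    inner ℂ x (toEuclideanLin (hadamard (B * C) A) y) =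
      ∑ k, inner ℂ (WithLp.toLp 2 fun i => Bᴴ k i * x i : EuclideanSpace ℂ μ)
        (toEuclideanLin A (WithLp.toLp 2 fun j => C k j * y j)) := by
  simp only [toLpLin_apply, PiLp.inner_apply, RCLike.inner_apply, mulVec, dotProduct,
    hadamard_apply, mul_apply, conjTranspose_apply, Finset.sum_mul, map_mul, RCLike.star_def,
    Complex.conj_conj]
  conv_rhs => rw [Finset.sum_comm]
  refine Finset.sum_congr rfl fun i _ => ?_
  conv_rhs => rw [Finset.sum_comm]
  exact Finset.sum_congr rfl fun j _ => Finset.sum_congr rfl fun k _ => by ring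

theorem norm_toEuclideanLin_apply_le {m n : ℕ} (A : Matrix (Fin m) (Fin n) ℂ)
    (v : EuclideanSpace ℂ (Fin n)) : ‖toEuclideanLin A v‖ ≤ opNorm A * ‖v‖ :=
  (toEuclideanLin A).toContinuousLinearMap.le_opNorm v

theorem opNorm_hadamard_mul_le {m n : ℕ} (B : Matrix (Fin m) ι ℂ) (C : Matrix ι (Fin n) ℂ)
    (A : Matrix (Fin m) (Fin n) ℂ) :
    opNorm (hadamard (B * C) A) ≤
      √(⨆ i, ∑ k, ‖B i k‖ ^ 2) * √(⨆ j, ∑ k, ‖C k j‖ ^ 2) * opNorm A := by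
  have hA : 0 ≤ opNorm A := norm_nonneg _
  refine ContinuousLinearMap.opNorm_le_of_re_inner_le (by positivity) fun y x hy hx => ?_
  set u : ι → EuclideanSpace ℂ (Fin m) := fun k => WithLp.toLp 2 fun i => Bᴴ k i * x i
  set v : ι → EuclideanSpace ℂ (Fin n) := fun k => WithLp.toLp 2 fun j => C k j * y j
  have hu : √(∑ k, ‖u k‖ ^ 2) ≤ √(⨆ i, ∑ k, ‖B i k‖ ^ 2) := by
    gcongr
    simpa [u, hx] using sum_norm_sq_toLp_mul_le Bᴴ x
  have hv : √(∑ k, ‖v k‖ ^ 2) ≤ √(⨆ j, ∑ k, ‖C k j‖ ^ 2) := by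
    gcongr
    simpa [v, hy] using sum_norm_sq_toLp_mul_le C y
  calc RCLike.re (inner ℂ ((toEuclideanLin (hadamard (B * C) A)).toContinuousLinearMap y) x)
      ≤ ‖inner ℂ x (toEuclideanLin (hadamard (B * C) A) y)‖ := by
        rw [norm_inner_symm]; exact RCLike.re_le_norm _
    _ = ‖∑ k, inner ℂ (u k) (toEuclideanLin A (v k))‖ := by
        rw [inner_toEuclideanLin_hadamard_mul]
    _ ≤ ∑ k, opNorm A * (‖u k‖ * ‖v k‖) := by
        refine norm_sum_le_of_le _ fun k _ => ?_
        calc ‖inner ℂ (u k) (toEuclideanLin A (v k))‖ ≤ ‖u k‖ * ‖toEuclideanLin A (v k)‖ :=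
              norm_inner_le_norm _ _
          _ ≤ ‖u k‖ * (opNorm A * ‖v k‖) := by gcongr; exact norm_toEuclideanLin_apply_le A _
          _ = opNorm A * (‖u k‖ * ‖v k‖) := by ring
    _ ≤ opNorm A * (√(∑ k, ‖u k‖ ^ 2) * √(∑ k, ‖v k‖ ^ 2)) := by
        rw [← Finset.mul_sum]
        exact mul_le_mul_of_nonneg_left (Real.sum_mul_le_sqrt_mul_sqrt _ _ _) hA
    _ ≤ opNorm A * (√(⨆ i, ∑ k, ‖B i k‖ ^ 2) * √(⨆ j, ∑ k, ‖C k j‖ ^ 2)) :=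
        mul_le_mul_of_nonneg_left (mul_le_mul hu hv (Real.sqrt_nonneg _) (Real.sqrt_nonneg _)) hA
    _ = _ := by ring

end SchurMultiplier

/-- Walter's bound: the Schur multiplier norm of `X` is bounded by
`‖(XXᴴ)^{1/2}‖_c^{1/2} * ‖(XᴴX)^{1/2}‖_c^{1/2}` expressed via diagonal entries of the
positive semidefinite square roots. -/
theorem schur_multiplier_norm_le_walter
    (m n : ℕ) (X : Matrix (Fin m) (Fin n) ℂ) (A : Matrix (Fin m) (Fin n) ℂ) :
    opNorm (Matrix.hadamard X A) ≤
      Real.sqrt (⨆ i : Fin m, (posSemidefSqrt (Matrix.posSemidef_self_mul_conjTranspose X) i i).re) *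
        Real.sqrt (⨆ j : Fin n, (posSemidefSqrt (Matrix.posSemidef_conjTranspose_mul_self X) j j).re) *
        opNorm A := by
  obtain ⟨B, C, rfl, hB, hC⟩ := exists_mul_eq_and_posSemidefSqrt_eq X
  rw [← hB, ← hC]
  simpa only [re_mul_conjTranspose_apply_self, re_conjTranspose_mul_apply_self] using
    opNorm_hadamard_mul_le B C A
end

section
/- Let X be an m×n complex matrix. Then ‖T_X‖ equals the supremum of |Tr((C Δ_n(ξ))ᴴ X)| over all m×n complex matrices C with ‖C‖_∞ ≤ 1 and all ξ ∈ ℂⁿ with ‖ξ‖₂ ≤ 1. -/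
open Matrix BigOperators

/-- The Euclidean norm of a complex vector. -/
noncomputable def eNorm {n : ℕ} (ξ : Fin n → ℂ) : ℝ :=
  Real.sqrt (∑ j, ‖ξ j‖ ^ 2)

/-- The norm of the bilinear map `T_X : (a, B) ↦ (∑_i a_i X_{ij} B_{ij})_j`, the
supremum over `max_i |a_i| ≤ 1` and `‖B‖_∞ ≤ 1` of `‖T_X(a,B)‖₂`. -/
noncomputable def TxNorm {m n : ℕ} (X : Matrix (Fin m) (Fin n) ℂ) : ℝ :=
  ⨆ p : {p : (Fin m → ℂ) × Matrix (Fin m) (Fin n) ℂ //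
      (∀ i, ‖p.1 i‖ ≤ 1) ∧ opNorm p.2 ≤ 1},
    eNorm (fun j => ∑ i, p.1.1 i * X i j * p.1.2 i j)


/-! With `w(M)_j = ∑ᵢ M_ij X_ij`, i.e. `w(M) = diag (Mᵀ X)`, one has `T_X(a, B) = w(Δ(a) B)` and
`Tr((C Δ(ξ))ᴴ X) = ⟪ξ, w(C̄)⟫`, where `C̄` is the entrywise conjugate. Both `Δ(a) B` and `C̄` range
over the unit ball of the ℓ² operator norm (`a = 1` already gives all of it), and
`sup_{‖ξ‖₂ ≤ 1} |⟪ξ, w⟫| = ‖w‖₂`, so both suprema equal `sup_{‖M‖ ≤ 1} ‖w(M)‖₂`. -/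

open scoped Matrix.Norms.L2Operator

lemma Real.iSup_le_iSup_of_forall_exists {ι κ : Sort*} {f : ι → ℝ} {g : κ → ℝ}
    (hg : BddAbove (Set.range g)) (hg₀ : ∀ k, 0 ≤ g k) (h : ∀ i, ∃ k, f i ≤ g k) :
    ⨆ i, f i ≤ ⨆ k, g k :=
  Real.iSup_le (fun i => (h i).elim fun _ hk => le_ciSup_of_le hg _ hk) (Real.iSup_nonneg hg₀)

lemma BddAbove.range_of_forall_exists_le {α : Type*} [Preorder α] {ι κ : Sort*} {f : ι → α}
    {g : κ → α} (hf : BddAbove (Set.range f)) (h : ∀ k, ∃ i, g k ≤ f i) :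
    BddAbove (Set.range g) := by
  obtain ⟨b, hb⟩ := hf
  exact ⟨b, Set.forall_mem_range.2 fun k => (h k).elim fun i hi => hi.trans (hb ⟨i, rfl⟩)⟩

lemma EuclideanSpace.norm_toLp_star {𝕜 ι : Type*} [RCLike 𝕜] [Fintype ι] (x : ι → 𝕜) :
    ‖WithLp.toLp 2 (star x)‖ = ‖WithLp.toLp 2 x‖ := by
  simp [EuclideanSpace.norm_eq]

lemma exists_norm_le_one_norm_inner_eq_norm {𝕜 E : Type*} [RCLike 𝕜] [NormedAddCommGroup E]
    [InnerProductSpace 𝕜 E] (w : E) : ∃ ξ : E, ‖ξ‖ ≤ 1 ∧ ‖inner 𝕜 ξ w‖ = ‖w‖ := by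
  refine ⟨((‖w‖⁻¹ : ℝ) : 𝕜) • w, ?_, ?_⟩
  · rw [norm_smul, RCLike.norm_ofReal, abs_inv, abs_norm]
    exact inv_mul_le_one_of_le₀ le_rfl (norm_nonneg w)
  · rw [inner_smul_left, inner_self_eq_norm_sq_to_K, norm_mul, RCLike.norm_conj, norm_pow,
      RCLike.norm_ofReal, RCLike.norm_ofReal, abs_inv, abs_norm]
    rcases eq_or_ne ‖w‖ 0 with h | h
    · simp [h]
    · field_simp

namespace Matrix

lemma map_star_mulVec {R m n : Type*} [CommSemiring R] [StarRing R] [Fintype n]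
    (A : Matrix m n R) (x : n → R) : A.map star *ᵥ x = star (A *ᵥ star x) := by
  ext i
  simp [mulVec, dotProduct, star_sum, mul_comm]

lemma trace_conjTranspose_mul_diagonal_mul {𝕜 m n : Type*} [RCLike 𝕜] [Fintype m] [Fintype n]
    [DecidableEq n] (C X : Matrix m n 𝕜) (ξ : n → 𝕜) :
    ((C * diagonal ξ)ᴴ * X).trace = inner 𝕜 (WithLp.toLp 2 ξ) (WithLp.toLp 2 (Cᴴ * X).diag) := by
  rw [conjTranspose_mul, diagonal_conjTranspose, Matrix.mul_assoc, EuclideanSpace.inner_toLp_toLp,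
    dotProduct_comm]
  simp [trace, dotProduct, mul_apply, diagonal, ite_mul, Finset.sum_ite_eq]

lemma diag_transpose_diagonal_mul_mul {R m n : Type*} [CommSemiring R] [Fintype m]
    [DecidableEq m] (a : m → R) (B X : Matrix m n R) :
    ((diagonal a * B)ᵀ * X).diag = fun j => ∑ i, a i * X i j * B i j := by
  ext j
  rw [diag_apply, mul_apply]
  exact Finset.sum_congr rfl fun i _ => by rw [transpose_apply, diagonal_mul]; ring

lemma norm_sum_mul_mul_le {R m n : Type*} [SeminormedRing R] [Fintype m] {a : m → R}
    {B : Matrix m n R} (ha : ∀ i, ‖a i‖ ≤ 1) (hB : ∀ i j, ‖B i j‖ ≤ 1) (X : Matrix m n R) (j : n) :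
    ‖∑ i, a i * X i j * B i j‖ ≤ ∑ i, ‖X i j‖ := by
  refine (norm_sum_le _ _).trans (Finset.sum_le_sum fun i _ => ?_)
  calc ‖a i * X i j * B i j‖ ≤ ‖a i‖ * ‖X i j‖ * ‖B i j‖ := norm_mul₃_le
    _ ≤ 1 * ‖X i j‖ * 1 := by gcongr <;> simp [ha, hB]
    _ = ‖X i j‖ := by ring

section L2OpNorm

variable {𝕜 m n : Type*} [RCLike 𝕜] [Fintype m] [Fintype n] [DecidableEq n]

lemma norm_entry_le_l2_opNorm (A : Matrix m n 𝕜) (i : m) (j : n) : ‖A i j‖ ≤ ‖A‖ := by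
  have h := A.l2_opNorm_mulVec (PiLp.single 2 j 1)
  rw [PiLp.norm_single, norm_one, mul_one] at h
  refine le_trans (le_of_eq_of_le ?_ (PiLp.norm_apply_le _ i)) h
  simp [EuclideanSpace.equiv, mulVec_single]

lemma l2_opNorm_map_star_le (A : Matrix m n 𝕜) : ‖A.map star‖ ≤ ‖A‖ := by
  rw [l2_opNorm_def]
  refine ContinuousLinearMap.opNorm_le_bound _ (norm_nonneg A) fun x => ?_
  calc _ = ‖WithLp.toLp 2 (star (A *ᵥ star x.ofLp))‖ := by rw [← A.map_star_mulVec]; rfl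
    _ = ‖WithLp.toLp 2 (A *ᵥ star x.ofLp)‖ := EuclideanSpace.norm_toLp_star _
    _ ≤ ‖A‖ * ‖WithLp.toLp 2 (star x.ofLp)‖ := A.l2_opNorm_mulVec _
    _ = ‖A‖ * ‖x‖ := by rw [EuclideanSpace.norm_toLp_star]

lemma l2_opNorm_diagonal_mul_le [DecidableEq m] {a : m → 𝕜} {B : Matrix m n 𝕜}
    (ha : ∀ i, ‖a i‖ ≤ 1) (hB : ‖B‖ ≤ 1) : ‖diagonal a * B‖ ≤ 1 := by
  calc ‖diagonal a * B‖ ≤ ‖(diagonal a : Matrix m m 𝕜)‖ * ‖B‖ := l2_opNorm_mul _ _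
    _ ≤ 1 * 1 := by
      gcongr
      rw [l2_opNorm_diagonal]
      exact pi_norm_le_iff_of_nonneg zero_le_one |>.mpr ha
    _ = 1 := one_mul 1

end L2OpNorm

end Matrix

section

variable {m n : ℕ}

lemma opNorm_eq_l2_opNorm (A : Matrix (Fin m) (Fin n) ℂ) : opNorm A = ‖A‖ :=
  (l2_opNorm_def A).symm

lemma eNorm_eq_norm_toLp (ξ : Fin n → ℂ) : eNorm ξ = ‖WithLp.toLp 2 ξ‖ :=
  (EuclideanSpace.norm_eq _).symm

lemma bddAbove_range_txNorm_family (X : Matrix (Fin m) (Fin n) ℂ) :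
    BddAbove (Set.range fun p : {p : (Fin m → ℂ) × Matrix (Fin m) (Fin n) ℂ //
      (∀ i, ‖p.1 i‖ ≤ 1) ∧ opNorm p.2 ≤ 1} => eNorm (fun j => ∑ i, p.1.1 i * X i j * p.1.2 i j)) := by
  refine ⟨Real.sqrt (∑ j, (∑ i, ‖X i j‖) ^ 2), ?_⟩
  rintro _ ⟨⟨⟨a, B⟩, ha, hB⟩, rfl⟩
  refine Real.sqrt_le_sqrt (Finset.sum_le_sum fun j _ => pow_le_pow_left₀ (norm_nonneg _) ?_ 2)
  rw [opNorm_eq_l2_opNorm] at hB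
  exact norm_sum_mul_mul_le ha (fun i j => (B.norm_entry_le_l2_opNorm i j).trans hB) X j

lemma exists_norm_trace_pairing_eq_eNorm {a : Fin m → ℂ} {B : Matrix (Fin m) (Fin n) ℂ}
    (ha : ∀ i, ‖a i‖ ≤ 1) (hB : opNorm B ≤ 1) (X : Matrix (Fin m) (Fin n) ℂ) :
    ∃ C : Matrix (Fin m) (Fin n) ℂ, ∃ ξ : Fin n → ℂ, opNorm C ≤ 1 ∧ eNorm ξ ≤ 1 ∧
      eNorm (fun j => ∑ i, a i * X i j * B i j) = ‖((C * diagonal ξ)ᴴ * X).trace‖ := by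
  set M := diagonal a * B
  obtain ⟨ξ, hξ, hξM⟩ :=
    exists_norm_le_one_norm_inner_eq_norm (𝕜 := ℂ) (WithLp.toLp 2 (Mᵀ * X).diag)
  refine ⟨M.map star, ξ.ofLp, ?_, by rwa [eNorm_eq_norm_toLp], ?_⟩
  · rw [opNorm_eq_l2_opNorm] at hB ⊢
    exact M.l2_opNorm_map_star_le.trans (l2_opNorm_diagonal_mul_le ha hB)
  · have hM : (M.map star)ᴴ = Mᵀ := by ext; simp
    rw [trace_conjTranspose_mul_diagonal_mul, hM, hξM, eNorm_eq_norm_toLp,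
      diag_transpose_diagonal_mul_mul]

lemma exists_norm_trace_pairing_le_eNorm {C : Matrix (Fin m) (Fin n) ℂ} {ξ : Fin n → ℂ}
    (hC : opNorm C ≤ 1) (hξ : eNorm ξ ≤ 1) (X : Matrix (Fin m) (Fin n) ℂ) :
    ∃ a : Fin m → ℂ, ∃ B : Matrix (Fin m) (Fin n) ℂ, (∀ i, ‖a i‖ ≤ 1) ∧ opNorm B ≤ 1 ∧
      ‖((C * diagonal ξ)ᴴ * X).trace‖ ≤ eNorm (fun j => ∑ i, a i * X i j * B i j) := by
  refine ⟨fun _ => 1, C.map star, fun _ => norm_one.le, ?_, ?_⟩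
  · rw [opNorm_eq_l2_opNorm] at hC ⊢
    exact C.l2_opNorm_map_star_le.trans hC
  · rw [trace_conjTranspose_mul_diagonal_mul, ← diag_transpose_diagonal_mul_mul, diagonal_one,
      Matrix.one_mul, ← transpose_map, eNorm_eq_norm_toLp]
    rw [eNorm_eq_norm_toLp] at hξ
    calc _ ≤ ‖WithLp.toLp 2 ξ‖ * ‖WithLp.toLp 2 (Cᴴ * X).diag‖ := norm_inner_le_norm _ _
      _ ≤ 1 * ‖WithLp.toLp 2 (Cᴴ * X).diag‖ := by gcongr
      _ = _ := one_mul _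

end

/-- `‖T_X‖` equals the supremum of `|Tr((C Δ_n(ξ))ᴴ X)|` over `‖C‖_∞ ≤ 1` and
`‖ξ‖₂ ≤ 1`. -/
theorem TxNorm_eq_sup_trace_pairing
    (m n : ℕ) (X : Matrix (Fin m) (Fin n) ℂ) :
    TxNorm X =
      ⨆ q : {q : Matrix (Fin m) (Fin n) ℂ × (Fin n → ℂ) //
          opNorm q.1 ≤ 1 ∧ eNorm q.2 ≤ 1},
        ‖((q.1.1 * Matrix.diagonal q.1.2)ᴴ * X).trace‖ := by
  have hT := bddAbove_range_txNorm_family X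
  refine le_antisymm
    (Real.iSup_le_iSup_of_forall_exists (hT.range_of_forall_exists_le ?rhs_le)
      (fun _ => norm_nonneg _) ?lhs_le)
    (Real.iSup_le_iSup_of_forall_exists hT (fun _ => Real.sqrt_nonneg _) ?rhs_le)
  case lhs_le =>
    rintro ⟨⟨a, B⟩, ha, hB⟩
    obtain ⟨C, ξ, hC, hξ, h⟩ := exists_norm_trace_pairing_eq_eNorm ha hB X
    exact ⟨⟨(C, ξ), hC, hξ⟩, h.le⟩
  case rhs_le =>
    rintro ⟨⟨C, ξ⟩, hC, hξ⟩
    obtain ⟨a, B, ha, hB, h⟩ := exists_norm_trace_pairing_le_eNorm hC hξ X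
    exact ⟨⟨(a, B), ha, hB⟩, h⟩
end
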